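/- arXiv:2007.11547 — 5 statements merged into one kernel-verified Lean document; each statement's English description precedes it below -/
import Mathlib

section
/- For every f ∈ H¹(T) (the one-dimensional torus of length 2π), one has ‖∂_y(sin(y)·f(y))‖_{L²} ≥ (1/2)·‖f‖_{L²}. -/
/-!
With `g = sin · f`, completing the square gives pointwise
`4 g'² - f² = (sin f)² + (cos f + 2 sin f')² + 2 (sin cos f²)'`,
and the last term integrates to zero because `sin` vanishes at both endpoints.
-/

open Real intervalIntegral

theorem four_mul_sq_sub_sq_eq {s c a b : ℝ} (h : s ^ 2 + c ^ 2 = 1) :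
    4 * (c * a + s * b) ^ 2 - a ^ 2 =
      (s * a) ^ 2 + (c * a + 2 * s * b) ^ 2
        + 2 * ((c ^ 2 - s ^ 2) * a ^ 2 + 2 * s * c * a * b) := by
  linear_combination a ^ 2 * h

section

variable {f : ℝ → ℝ}

theorem hasDerivAt_sin_mul_cos_mul_sq {y : ℝ} (hf : DifferentiableAt ℝ f y) :
    HasDerivAt (fun t => sin t * cos t * f t ^ 2)
      ((cos y ^ 2 - sin y ^ 2) * f y ^ 2 + 2 * sin y * cos y * f y * deriv f y) y := by
  refine (((hasDerivAt_sin y).mul (hasDerivAt_cos y)).mul (hf.hasDerivAt.pow 2)).congr_deriv ?_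
  simp only [Pi.mul_apply, Pi.pow_apply]
  ring

theorem integral_deriv_sin_mul_cos_mul_sq_eq_zero (hf : ContDiff ℝ 1 f) {a b : ℝ}
    (ha : sin a = 0) (hb : sin b = 0) :
    ∫ y in a..b, ((cos y ^ 2 - sin y ^ 2) * f y ^ 2 + 2 * sin y * cos y * f y * deriv f y)
      = 0 := by
  have hf' : Continuous (deriv f) := hf.continuous_deriv le_rfl
  rw [integral_eq_sub_of_hasDerivAt
    (fun y _ => hasDerivAt_sin_mul_cos_mul_sq (hf.differentiable one_ne_zero y))
    (Continuous.intervalIntegrable (by fun_prop) a b), ha, hb]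
  simp

theorem integral_sq_le_four_mul_integral_deriv_sin_mul_sq (hf : ContDiff ℝ 1 f) {a b : ℝ}
    (hab : a ≤ b) (ha : sin a = 0) (hb : sin b = 0) :
    ∫ y in a..b, f y ^ 2 ≤ 4 * ∫ y in a..b, deriv (fun t => sin t * f t) y ^ 2 := by
  have hfd : Differentiable ℝ f := hf.differentiable one_ne_zero
  have hf' : Continuous (deriv f) := hf.continuous_deriv le_rfl
  have hg : deriv (fun t => sin t * f t) = fun y => cos y * f y + sin y * deriv f y :=
    funext fun y => ((hasDerivAt_sin y).mul (hfd y).hasDerivAt).deriv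
  have hsquares : 0 ≤ ∫ y in a..b,
      ((sin y * f y) ^ 2 + (cos y * f y + 2 * sin y * deriv f y) ^ 2) :=
    integral_nonneg hab fun y _ => by positivity
  have hdiff : ∫ y in a..b, (4 * deriv (fun t => sin t * f t) y ^ 2 - f y ^ 2) =
      ∫ y in a..b, ((sin y * f y) ^ 2 + (cos y * f y + 2 * sin y * deriv f y) ^ 2) := by
    simp_rw [hg, four_mul_sq_sub_sq_eq (sin_sq_add_cos_sq _)]
    rw [integral_add (Continuous.intervalIntegrable (by fun_prop) a b)
      (Continuous.intervalIntegrable (by fun_prop) a b), integral_const_mul,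
      integral_deriv_sin_mul_cos_mul_sq_eq_zero hf ha hb, mul_zero, add_zero]
  rw [integral_sub (Continuous.intervalIntegrable (by rw [hg]; fun_prop) a b)
    (Continuous.intervalIntegrable (by fun_prop) a b), integral_const_mul] at hdiff
  linarith

end

theorem deriv_sin_mul_lower_bound_general (f : ℝ → ℝ) (hf : ContDiff ℝ 1 f) :
    Real.sqrt (∫ y in (0:ℝ)..(2 * π), (deriv (fun t => Real.sin t * f t) y) ^ 2)
      ≥ (1 / 2) * Real.sqrt (∫ y in (0:ℝ)..(2 * π), (f y) ^ 2) := by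
  have h := integral_sq_le_four_mul_integral_deriv_sin_mul_sq hf (by positivity)
    sin_zero sin_two_pi
  rw [ge_iff_le, ← sqrt_sq (by norm_num : (0:ℝ) ≤ 1 / 2), ← sqrt_mul (by norm_num)]
  exact sqrt_le_sqrt (by linarith)

/-- For `f ∈ H¹` of the circle `ℝ/2πℤ` (here: a `C¹`, `2π`-periodic function),
one has `‖∂_y (sin y · f)‖_{L²} ≥ (1/2) ‖f‖_{L²}`. -/
theorem deriv_sin_mul_lower_bound (f : ℝ → ℝ) (hf : ContDiff ℝ 1 f)
    (hper : Function.Periodic f (2 * π)) :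
    Real.sqrt (∫ y in (0:ℝ)..(2 * π), (deriv (fun t => Real.sin t * f t) y) ^ 2)
      ≥ (1 / 2) * Real.sqrt (∫ y in (0:ℝ)..(2 * π), (f y) ^ 2) :=
  deriv_sin_mul_lower_bound_general f hf
end

section
/- For every natural number N, the sum ∑_{m=0}^{N} 1/((1+m)²·(1+(N-m))²) is at most 15/(1+N)². -/
/-!
Since `1 / (a * b) = (1 / a + 1 / b) / (a + b)`, each term with `a = 1 + m`, `b = 1 + (N - m)`
is at most `2 (1 / a² + 1 / b²) / (N + 2)²`. Summing over `m`, both halves are the partial sum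
`∑ 1 / (1 + m)² ≤ 2`, so the whole sum is at most `8 / (N + 2)² ≤ 15 / (N + 1)²`.
-/

open Finset

section LinearOrderedField

variable {α : Type*} [Field α] [LinearOrder α] [IsStrictOrderedRing α]

theorem one_div_sq_mul_sq_le {a b : α} (ha : 0 < a) (hb : 0 < b) :
    1 / (a ^ 2 * b ^ 2) ≤ 2 * (1 / a ^ 2 + 1 / b ^ 2) / (a + b) ^ 2 := by
  have hab : 1 / (a * b) = (1 / a + 1 / b) / (a + b) := by field_simp; ring
  calc 1 / (a ^ 2 * b ^ 2) = (1 / a + 1 / b) ^ 2 / (a + b) ^ 2 := by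
        rw [← mul_pow, ← one_div_pow, hab, div_pow]
    _ ≤ 2 * (1 / a ^ 2 + 1 / b ^ 2) / (a + b) ^ 2 := by
        rw [← one_div_pow, ← one_div_pow]
        gcongr
        exact add_sq_le

theorem sum_range_one_div_one_add_sq_le_two (n : ℕ) :
    ∑ m ∈ range n, 1 / (1 + (m : α)) ^ 2 ≤ 2 := by
  have h := sum_Ioo_inv_sq_le (α := α) 0 (n + 1)
  rw [Nat.cast_zero, zero_add, div_one] at h
  convert h using 1
  rw [range_eq_Ico, ← Ico_add_one_left_eq_Ioo, ← sum_Ico_add']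
  simp [add_comm]

end LinearOrderedField

/-- For every natural number `N`,
`∑_{m=0}^{N} 1/((1+m)²(1+(N-m))²) ≤ 15/(1+N)²`. -/
theorem convolution_weight_sum_bound (N : ℕ) :
    ∑ m ∈ Finset.range (N + 1),
        (1 : ℝ) / ((1 + (m : ℝ)) ^ 2 * (1 + ((N - m : ℕ) : ℝ)) ^ 2)
      ≤ 15 / (1 + (N : ℝ)) ^ 2 := by
  set S := ∑ m ∈ range (N + 1), 1 / (1 + (m : ℝ)) ^ 2
  have hS : S ≤ 2 := sum_range_one_div_one_add_sq_le_two (N + 1)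
  have hS_reflect : ∑ m ∈ range (N + 1), 1 / (1 + ((N - m : ℕ) : ℝ)) ^ 2 = S := by
    simpa only [add_tsub_cancel_right] using
      sum_range_reflect (fun m ↦ 1 / (1 + (m : ℝ)) ^ 2) (N + 1)
  have h_pointwise : ∀ m ∈ range (N + 1),
      (1 : ℝ) / ((1 + (m : ℝ)) ^ 2 * (1 + ((N - m : ℕ) : ℝ)) ^ 2)
        ≤ 2 / (2 + N : ℝ) ^ 2 *
          (1 / (1 + (m : ℝ)) ^ 2 + 1 / (1 + ((N - m : ℕ) : ℝ)) ^ 2) := by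
    intro m hm
    have hsum : (1 + (m : ℝ)) + (1 + ((N - m : ℕ) : ℝ)) = 2 + N := by
      rw [Nat.cast_sub (Nat.lt_succ_iff.mp (mem_range.mp hm))]; ring
    rw [div_mul_eq_mul_div, ← hsum]
    exact one_div_sq_mul_sq_le (by positivity) (by positivity)
  calc _ ≤ 2 / (2 + N : ℝ) ^ 2 * (S + S) := by
        nth_rw 2 [← hS_reflect]
        rw [← sum_add_distrib, mul_sum]
        exact sum_le_sum h_pointwise
    _ ≤ 8 / (2 + N : ℝ) ^ 2 := by
        rw [div_mul_eq_mul_div]; gcongr; linarith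
    _ ≤ 15 / (1 + N : ℝ) ^ 2 := by gcongr <;> linarith
end

section
/- Let δ > 0 with δ ∉ ℕ. On the rectangular torus T²_δ = (ℝ/2πδℤ) × (ℝ/2πℤ), there exists a constant c_δ > 0 such that for every mean-free f ∈ H²(T²_δ) one has ‖(1 + Δ_δ^{-1})∂_x f‖_{L²} ≥ c_δ·‖∂_x f‖_{L²}, where Δ_δ^{-1} is the inverse Laplacian on mean-free functions. -/
/-!
Only modes with `k ≠ 0` contribute, and there the symbol `1 - s⁻¹`, `s = (k/δ)² + ℓ²`, stays
away from `0`: it is at least `1/2` once `s ≥ 2`, and otherwise comparable to `|s - 1|`.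
For `ℓ ≠ 0` one has `s - 1 ≥ δ⁻²`, while for `ℓ = 0` the quantity `|k² - δ²|` is at least
`δ` times the distance from `δ` to the nearest integer, which is positive as `δ ∉ ℕ`.
Since the symbol is also bounded above, the weighted sums can be compared term by term.
-/

theorem le_tsum_sq_mul_of_le_abs {ι : Type*} {m w : ι → ℝ} {c C : ℝ} (hw : 0 ≤ w)
    (hw_sum : Summable w) (hc : 0 ≤ c) (hlow : ∀ i, w i ≠ 0 → c ≤ |m i|)
    (hup : ∀ i, w i ≠ 0 → |m i| ≤ C) :
    c ^ 2 * ∑' i, w i ≤ ∑' i, m i ^ 2 * w i := by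
  have hsq_le : ∀ i, c ^ 2 * w i ≤ m i ^ 2 * w i ∧ m i ^ 2 * w i ≤ C ^ 2 * w i := by
    intro i
    rcases eq_or_ne (w i) 0 with h | h
    · simp [h]
    · have hm := hlow i h
      rw [← sq_abs (m i)]
      exact ⟨mul_le_mul_of_nonneg_right (pow_le_pow_left₀ hc hm 2) (hw i),
        mul_le_mul_of_nonneg_right (pow_le_pow_left₀ (hc.trans hm) (hup i h) 2) (hw i)⟩
  have hmw_sum : Summable fun i => m i ^ 2 * w i :=
    (hw_sum.mul_left (C ^ 2)).of_nonneg_of_le (fun i => mul_nonneg (sq_nonneg (m i)) (hw i))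
      fun i => (hsq_le i).2
  rw [← tsum_mul_left]
  exact (hw_sum.mul_left _).tsum_le_tsum (fun i => (hsq_le i).1) hmw_sum

theorem min_le_abs_one_sub_inv {s : ℝ} (hs : 0 < s) : min (1 / 2) (|s - 1| / 2) ≤ |1 - s⁻¹| := by
  rcases le_or_gt 2 s with h2 | h2
  · refine (min_le_left _ _).trans ?_
    have : s⁻¹ ≤ 2⁻¹ := inv_anti₀ (by norm_num) h2
    rw [abs_of_nonneg (by linarith)]
    linarith
  · refine (min_le_right _ _).trans ?_
    rw [inv_eq_one_div, one_sub_div hs.ne', abs_div, abs_of_pos hs]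
    exact div_le_div_of_nonneg_left (abs_nonneg _) hs h2.le

theorem one_le_intCast_sq {k : ℤ} (hk : k ≠ 0) : (1 : ℝ) ≤ (k : ℝ) ^ 2 := by
  rw [one_le_sq_iff_one_le_abs, ← Int.cast_abs]
  exact_mod_cast Int.one_le_abs hk

section RectangularTorus

variable {δ : ℝ}

theorem inv_sq_le_div_sq {k : ℤ} (hk : k ≠ 0) : (δ ^ 2)⁻¹ ≤ ((k : ℝ) / δ) ^ 2 := by
  rw [div_pow, inv_eq_one_div]
  exact div_le_div_of_nonneg_right (one_le_intCast_sq hk) (sq_nonneg δ)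

theorem abs_sub_round_mul_le_abs_sq_sub_sq (hδ : 0 ≤ δ) (k : ℤ) :
    |δ - round δ| * δ ≤ |(k : ℝ) ^ 2 - δ ^ 2| := by
  have hround : |δ - round δ| ≤ |δ - (|(k : ℝ)|)| := by
    simpa using round_le δ |k|
  calc |δ - round δ| * δ ≤ |δ - (|(k : ℝ)|)| * (|(k : ℝ)| + δ) :=
        mul_le_mul hround (by linarith [abs_nonneg (k : ℝ)]) hδ (abs_nonneg _)
    _ = |(k : ℝ) ^ 2 - δ ^ 2| := by
        rw [← sq_abs (k : ℝ), sq_sub_sq, abs_mul, abs_sub_comm,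
          abs_of_nonneg (by positivity : 0 ≤ |(k : ℝ)| + δ)]
        ring

theorem abs_sub_round_pos_of_ne_natCast (hδ : 0 ≤ δ) (hδn : ∀ n : ℕ, δ ≠ n) :
    0 < |δ - round δ| := by
  refine abs_pos.mpr (sub_ne_zero.mpr fun h => hδn (round δ).toNat ?_)
  have hround_nonneg : 0 ≤ round δ := by exact_mod_cast h ▸ hδ
  rw [← Int.toNat_of_nonneg hround_nonneg] at h
  exact_mod_cast h

theorem exists_pos_le_abs_freq_sq_sub_one (hδ : 0 < δ) (hδn : ∀ n : ℕ, δ ≠ n) :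
    ∃ η > 0, ∀ k ℓ : ℤ, k ≠ 0 → η ≤ |((k : ℝ) / δ) ^ 2 + (ℓ : ℝ) ^ 2 - 1| := by
  have hround := abs_sub_round_pos_of_ne_natCast hδ.le hδn
  refine ⟨min (δ ^ 2)⁻¹ (|δ - round δ| / δ), by positivity, fun k ℓ hk => ?_⟩
  rcases eq_or_ne ℓ 0 with rfl | hℓ
  · refine (min_le_right _ _).trans ?_
    have hδ2 : 0 < δ ^ 2 := by positivity
    rw [Int.cast_zero, zero_pow two_ne_zero, add_zero, div_pow, div_sub_one hδ2.ne', abs_div,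
      abs_of_pos hδ2, le_div_iff₀ hδ2]
    calc |δ - round δ| / δ * δ ^ 2 = |δ - round δ| * δ := by field_simp
      _ ≤ _ := abs_sub_round_mul_le_abs_sq_sub_sq hδ.le k
  · refine (min_le_left _ _).trans ?_
    have hℓ_sq := one_le_intCast_sq hℓ
    have hk_sq := inv_sq_le_div_sq (δ := δ) hk
    have : 0 ≤ (δ ^ 2)⁻¹ := by positivity
    rw [abs_of_nonneg (by linarith)]
    linarith

theorem exists_pos_le_abs_symbol (hδ : 0 < δ) (hδn : ∀ n : ℕ, δ ≠ n) :
    ∃ c > 0, ∀ k ℓ : ℤ, k ≠ 0 → c ≤ |1 - (((k : ℝ) / δ) ^ 2 + (ℓ : ℝ) ^ 2)⁻¹| := by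
  obtain ⟨η, hη, hgap⟩ := exists_pos_le_abs_freq_sq_sub_one hδ hδn
  refine ⟨min (1 / 2) (η / 2), by positivity, fun k ℓ hk => ?_⟩
  have hs : 0 < ((k : ℝ) / δ) ^ 2 + (ℓ : ℝ) ^ 2 := by
    have := one_le_intCast_sq hk
    positivity
  calc min (1 / 2) (η / 2) ≤ min (1 / 2) (|((k : ℝ) / δ) ^ 2 + (ℓ : ℝ) ^ 2 - 1| / 2) := by
        gcongr
        exact hgap k ℓ hk
    _ ≤ _ := min_le_abs_one_sub_inv hs

theorem abs_symbol_le (hδ : δ ≠ 0) {k : ℤ} (hk : k ≠ 0) (ℓ : ℤ) :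
    |1 - (((k : ℝ) / δ) ^ 2 + (ℓ : ℝ) ^ 2)⁻¹| ≤ 1 + δ ^ 2 := by
  have hk_sq : (δ ^ 2)⁻¹ ≤ ((k : ℝ) / δ) ^ 2 + (ℓ : ℝ) ^ 2 := by
    linarith [inv_sq_le_div_sq (δ := δ) hk, sq_nonneg (ℓ : ℝ)]
  have hinv : (((k : ℝ) / δ) ^ 2 + (ℓ : ℝ) ^ 2)⁻¹ ≤ δ ^ 2 := by
    simpa using inv_anti₀ (by positivity) hk_sq
  calc _ ≤ |(1 : ℝ)| + |(((k : ℝ) / δ) ^ 2 + (ℓ : ℝ) ^ 2)⁻¹| := abs_sub _ _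
    _ ≤ 1 + δ ^ 2 := by
        rw [abs_one, abs_of_nonneg (by positivity)]
        linarith

end RectangularTorus

/-- Spectral gap for `(1 + Δ_δ⁻¹)∂_x` on the rectangular torus `T²_δ`, `δ ∉ ℕ`,
expressed on the Fourier side: modes are indexed by `(k, ℓ) ∈ ℤ²` with frequencies
`(k/δ, ℓ)`; `∂_x` multiplies the `(k,ℓ)` coefficient by `i k/δ` and `Δ_δ⁻¹` by
`-1/((k/δ)² + ℓ²)` (on mean-free functions). There is `c_δ > 0` with
`‖(1 + Δ_δ⁻¹)∂_x f‖_{L²} ≥ c_δ ‖∂_x f‖_{L²}` for all mean-free `f ∈ H²`. -/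
theorem spectral_gap_rectangular_torus (δ : ℝ) (hδ : 0 < δ) (hδn : ∀ n : ℕ, δ ≠ n) :
    ∃ c : ℝ, 0 < c ∧
      ∀ a : ℤ × ℤ → ℂ, a (0, 0) = 0 →
        Summable (fun p : ℤ × ℤ => (((p.1 : ℝ) / δ) ^ 2) * ‖a p‖ ^ 2) →
        ∑' p : ℤ × ℤ,
            ((1 - (((p.1 : ℝ) / δ) ^ 2 + (p.2 : ℝ) ^ 2)⁻¹) * ((p.1 : ℝ) / δ)) ^ 2 * ‖a p‖ ^ 2
          ≥ c ^ 2 * ∑' p : ℤ × ℤ, (((p.1 : ℝ) / δ) ^ 2) * ‖a p‖ ^ 2 := by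
  obtain ⟨c, hc, hlow⟩ := exists_pos_le_abs_symbol hδ hδn
  refine ⟨c, hc, fun a _ hsum => ?_⟩
  have hk : ∀ p : ℤ × ℤ, ((p.1 : ℝ) / δ) ^ 2 * ‖a p‖ ^ 2 ≠ 0 → p.1 ≠ 0 := by
    rintro ⟨k, ℓ⟩ hp rfl
    simp at hp
  have := le_tsum_sq_mul_of_le_abs (fun p => by positivity) hsum hc.le
    (fun p hp => hlow p.1 p.2 (hk p hp)) (fun p hp => abs_symbol_le hδ.ne' (hk p hp) p.2)
  simpa only [mul_pow, mul_assoc] using this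
end

section
/- On the square torus T², the kernel of the linearized operator L_K = sin(y)(1 + Δ^{-1})∂_x acting on mean-free L² functions equals the set of functions f such that either ∂_x f ≡ 0 (pure shears), or f lies in the span of cos(x) and sin(x) modulo shears; equivalently, f ∈ ker L_K iff f(x,y) = g(y) + a·cos(x) + b·sin(x) for some g ∈ L²(T) and a, b ∈ ℝ. -/
open Real

lemma sq_add_sq_cast (k l : ℤ) : (k : ℂ) ^ 2 + (l : ℂ) ^ 2 = ((k ^ 2 + l ^ 2 : ℤ) : ℂ) := by
  push_cast; ring

/-- Characterization of the kernel of `L_K = sin(y)(1 + Δ⁻¹)∂_x` on mean-free `L²(T²)`,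
on the Fourier side: a mean-free function with Fourier coefficients `c(k,ℓ)` lies in
`ker L_K` if and only if its coefficients vanish outside the shear modes `k = 0` and the
modes `e^{±ix}`, i.e. iff `f(x,y) = g(y) + a cos x + b sin x`.  Since multiplication by
`sin y` is injective, `f ∈ ker L_K` iff `(1 + Δ⁻¹)∂_x f = 0`, whose Fourier symbol on
the `(k,ℓ)` mode is `(1 - 1/(k² + ℓ²))·(i k)`. -/
theorem kernel_LK_square_torus (c : ℤ × ℤ → ℂ) (hmean : c (0, 0) = 0) :
    (∀ k l : ℤ, k ≠ 0 →
        ((1 - ((k : ℂ) ^ 2 + (l : ℂ) ^ 2)⁻¹) * (k : ℂ)) * c (k, l) = 0)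
      ↔
    (∀ k l : ℤ, k ≠ 0 → ((k = 1 ∧ l = 0) ∨ (k = -1 ∧ l = 0) ∨ c (k, l) = 0)) := by
  constructor
  · intro h k l hk
    by_cases h1 : k ^ 2 + l ^ 2 = 1
    · have h2 : 1 ≤ k ^ 2 := by rcases lt_or_gt_of_ne hk with h' | h' <;> nlinarith
      have hl : l = 0 := by nlinarith [sq_nonneg l]
      have hk2 : k = 1 ∨ k = -1 := by
        have : k * k = 1 := by nlinarith
        exact mul_self_eq_one_iff.mp this
      tauto
    · right; right
      have hne : ((k : ℂ) ^ 2 + (l : ℂ) ^ 2) ≠ 0 := by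
        rw [sq_add_sq_cast]
        exact_mod_cast (by positivity : (0:ℤ) < k ^ 2 + l ^ 2).ne'
      have hfac : (1 - ((k : ℂ) ^ 2 + (l : ℂ) ^ 2)⁻¹) ≠ 0 := by
        rw [sub_ne_zero]
        intro heq
        apply h1
        have : (k : ℂ) ^ 2 + (l : ℂ) ^ 2 = 1 := inv_eq_one.mp heq.symm
        rw [sq_add_sq_cast] at this
        exact_mod_cast this
      have hkc : (k : ℂ) ≠ 0 := Int.cast_ne_zero.mpr hk
      rcases mul_eq_zero.mp (h k l hk) with h' | h'
      · exact absurd h' (mul_ne_zero hfac hkc)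
      · exact h'
  · intro h k l hk
    rcases h k l hk with ⟨hk1, hl⟩ | ⟨hk1, hl⟩ | hc
    · subst hk1; subst hl; norm_num
    · subst hk1; subst hl; norm_num
    · simp [hc]
end

section
/- Let V ∈ C²([-1,1]) satisfy 1 ≤ V''(y) ≤ 3 for all y. Let ψ ∈ H³(T × [-1,1]) with ψ = 0 on the boundary y = ±1, and set ω = Δψ. Then ‖∂_{xx}ψ‖²_{L²} ≤ 4‖∂_{xy}ψ‖²_{L²} + ‖V'·∂_x ω‖²_{L²}. -/
/-!
With `u = ∂ₓψ` and a weight `W = V' - c`, the Rellich identity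
`2 W u_y Δu = ∂ₓ(2 W u_x u_y) + ∂_y(W (u_y² - u_x²)) + W' (u_x² - u_y²)`
integrates over the channel to `∫ V'' (u_x² - u_y²) ≤ 2 ∫ W u_y Δu`: the `x`-flux vanishes by
periodicity, and since `u_x = ∂ₓₓψ` vanishes on `y = ±1` the `y`-flux is
`W(1) ∫ u_y(·,1)² - W(-1) ∫ u_y(·,-1)²`, which is nonnegative as soon as `c ∈ [V'(-1), V'(1)]`.
Taking for `c` the point of that interval closest to `0` (`V'` is increasing) also gives
`|W| ≤ |V'|`, and then `1 ≤ V'' ≤ 3` with `2 W u_y Δu ≤ u_y² + (V' Δu)²` gives the estimate.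
-/

open Real

/-- Partial derivative in `x`. -/
noncomputable def pdx (f : ℝ × ℝ → ℝ) (p : ℝ × ℝ) : ℝ := deriv (fun t => f (t, p.2)) p.1

/-- Partial derivative in `y`. -/
noncomputable def pdy (f : ℝ × ℝ → ℝ) (p : ℝ × ℝ) : ℝ := deriv (fun t => f (p.1, t)) p.2

/-- Iterated partial derivative `∂_x^i ∂_y^j`. -/
noncomputable def pd (i j : ℕ) (f : ℝ × ℝ → ℝ) : ℝ × ℝ → ℝ := pdx^[i] (pdy^[j] f)

/-- The Laplacian `Δ = ∂_x² + ∂_y²`. -/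
noncomputable def lap (f : ℝ × ℝ → ℝ) : ℝ × ℝ → ℝ := fun p => pdx (pdx f) p + pdy (pdy f) p
/-- Integral over the channel `T × [-1,1]` (periodic in `x` with period `2π`). -/
noncomputable def cint (f : ℝ × ℝ → ℝ) : ℝ :=
  ∫ x in (0:ℝ)..(2 * π), ∫ y in (-1:ℝ)..1, f (x, y)

/-- Squared `L²` norm on the channel. -/
noncomputable def cL2sq (f : ℝ × ℝ → ℝ) : ℝ := cint (fun p => (f p) ^ 2)

open MeasureTheory intervalIntegral Set

section PartialDerivatives

variable {f : ℝ × ℝ → ℝ} {p : ℝ × ℝ}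

lemma hasDerivAt_pdx (hf : DifferentiableAt ℝ f p) :
    HasDerivAt (fun t => f (t, p.2)) (pdx f p) p.1 :=
  (hf.comp p.1 (differentiableAt_id.prodMk (differentiableAt_const _))).hasDerivAt

lemma hasDerivAt_pdy (hf : DifferentiableAt ℝ f p) :
    HasDerivAt (fun t => f (p.1, t)) (pdy f p) p.2 :=
  (hf.comp p.2 ((differentiableAt_const _).prodMk differentiableAt_id)).hasDerivAt

lemma pdx_eq_fderiv (hf : DifferentiableAt ℝ f p) : pdx f p = fderiv ℝ f p (1, 0) :=
  (hf.hasFDerivAt.comp_hasDerivAt p.1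
    ((hasDerivAt_id p.1).prodMk (hasDerivAt_const p.1 p.2))).deriv

lemma pdy_eq_fderiv (hf : DifferentiableAt ℝ f p) : pdy f p = fderiv ℝ f p (0, 1) :=
  (hf.hasFDerivAt.comp_hasDerivAt p.2
    ((hasDerivAt_const p.2 p.1).prodMk (hasDerivAt_id p.2))).deriv

lemma contDiff_pdx {m n : WithTop ℕ∞} (hf : ContDiff ℝ n f) (hmn : m + 1 ≤ n) :
    ContDiff ℝ m (pdx f) := by
  have hd : Differentiable ℝ f := (hf.of_le (le_add_self.trans hmn)).differentiable one_ne_zero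
  rw [show pdx f = fun q => fderiv ℝ f q (1, 0) from funext fun q => pdx_eq_fderiv (hd q)]
  exact (hf.fderiv_right hmn).clm_apply contDiff_const

lemma contDiff_pdy {m n : WithTop ℕ∞} (hf : ContDiff ℝ n f) (hmn : m + 1 ≤ n) :
    ContDiff ℝ m (pdy f) := by
  have hd : Differentiable ℝ f := (hf.of_le (le_add_self.trans hmn)).differentiable one_ne_zero
  rw [show pdy f = fun q => fderiv ℝ f q (0, 1) from funext fun q => pdy_eq_fderiv (hd q)]
  exact (hf.fderiv_right hmn).clm_apply contDiff_const

lemma pdx_pdy_comm (hf : ContDiff ℝ 2 f) : pdx (pdy f) = pdy (pdx f) := by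
  funext p
  have hd : Differentiable ℝ f := hf.differentiable (by norm_num)
  have hd' : Differentiable ℝ (fderiv ℝ f) :=
    (hf.fderiv_right le_rfl).differentiable one_ne_zero
  rw [show pdy f = fun q => fderiv ℝ f q (0, 1) from funext fun q => pdy_eq_fderiv (hd q),
    show pdx f = fun q => fderiv ℝ f q (1, 0) from funext fun q => pdx_eq_fderiv (hd q),
    pdx_eq_fderiv ((hd' p).clm_apply (differentiableAt_const _)),
    pdy_eq_fderiv ((hd' p).clm_apply (differentiableAt_const _))]
  simpa [fderiv_clm_apply (hd' p) (differentiableAt_const _)] using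
    (hf.contDiffAt.isSymmSndFDerivAt (by simp)).eq (1, 0) (0, 1)

lemma pdx_lap_comm (hf : ContDiff ℝ 3 f) : pdx (lap f) = lap (pdx f) := by
  funext p
  have hxx : ContDiff ℝ 1 (pdx (pdx f)) := contDiff_pdx (contDiff_pdx hf (by norm_num)) le_rfl
  have hyy : ContDiff ℝ 1 (pdy (pdy f)) := contDiff_pdy (contDiff_pdy hf (by norm_num)) le_rfl
  have hsum := (hasDerivAt_pdx ((hxx.differentiable one_ne_zero) p)).add
    (hasDerivAt_pdx ((hyy.differentiable one_ne_zero) p))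
  have hpdx : pdx (lap f) p = pdx (pdx (pdx f)) p + pdx (pdy (pdy f)) p := hsum.deriv
  rw [hpdx, pdx_pdy_comm (contDiff_pdy hf (by norm_num)),
    pdx_pdy_comm (hf.of_le (by norm_num))]
  rfl

lemma pdx_periodic {T : ℝ} (h : ∀ x y, f (x + T, y) = f (x, y)) (x y : ℝ) :
    pdx f (x + T, y) = pdx f (x, y) := by
  show deriv (fun t => f (t, y)) (x + T) = deriv (fun t => f (t, y)) x
  rw [← deriv_comp_add_const]
  simp only [h]

lemma pdy_periodic {T : ℝ} (h : ∀ x y, f (x + T, y) = f (x, y)) (x y : ℝ) :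
    pdy f (x + T, y) = pdy f (x, y) := by
  show deriv (fun t => f (x + T, t)) y = deriv (fun t => f (x, t)) y
  simp only [h]

lemma pdx_eq_zero_of_forall {b : ℝ} (h : ∀ x, f (x, b) = 0) (x : ℝ) : pdx f (x, b) = 0 := by
  show deriv (fun t => f (t, b)) x = 0
  simp only [h, deriv_const]

lemma rellich_identity {u : ℝ × ℝ → ℝ} (hu : ContDiff ℝ 2 u) {W : ℝ → ℝ} {w : ℝ}
    (hW : HasDerivAt W w p.2) :
    2 * W p.2 * pdy u p * lap u p
      = pdx (fun q => 2 * W q.2 * (pdx u q * pdy u q)) p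
        + pdy (fun q => W q.2 * (pdy u q ^ 2 - pdx u q ^ 2)) p
        + w * (pdx u p ^ 2 - pdy u p ^ 2) := by
  have hx : Differentiable ℝ (pdx u) := (contDiff_pdx hu le_rfl).differentiable one_ne_zero
  have hy : Differentiable ℝ (pdy u) := (contDiff_pdy hu le_rfl).differentiable one_ne_zero
  have hF : pdx (fun q => 2 * W q.2 * (pdx u q * pdy u q)) p
      = 2 * W p.2 * (pdx (pdx u) p * pdy u p + pdx u p * pdx (pdy u) p) :=
    (((hasDerivAt_pdx (hx p)).mul (hasDerivAt_pdx (hy p))).const_mul (2 * W p.2)).deriv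
  have hG : pdy (fun q => W q.2 * (pdy u q ^ 2 - pdx u q ^ 2)) p
      = w * (pdy u p ^ 2 - pdx u p ^ 2)
        + W p.2 * (2 * pdy u p * pdy (pdy u) p - 2 * pdx u p * pdy (pdx u) p) := by
    have h := hW.fun_mul
      (((hasDerivAt_pdy (hy p)).fun_pow 2).fun_sub ((hasDerivAt_pdy (hx p)).fun_pow 2))
    rw [show pdy (fun q => W q.2 * (pdy u q ^ 2 - pdx u q ^ 2)) p = _ from h.deriv]
    ring
  rw [hF, hG, pdx_pdy_comm hu, lap]
  ring

end PartialDerivatives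

section ChannelIntegral

variable {f g : ℝ × ℝ → ℝ}

lemma continuous_intervalIntegral_snd (hf : Continuous f) (a b : ℝ) :
    Continuous fun x => ∫ y in a..b, f (x, y) :=
  continuous_parametric_intervalIntegral_of_continuous' (f := fun x y => f (x, y))
    (hf.comp (continuous_fst.prodMk continuous_snd)) a b

lemma cint_add (hf : Continuous f) (hg : Continuous g) : cint (f + g) = cint f + cint g := by
  have hslice : ∀ (h : ℝ × ℝ → ℝ) (x : ℝ), Continuous h →
      IntervalIntegrable (fun y => h (x, y)) volume (-1) 1 :=
    fun h x hh => (hh.comp (continuous_const.prodMk continuous_id)).intervalIntegrable _ _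
  simp only [cint, Pi.add_apply]
  simp_rw [integral_add (hslice f _ hf) (hslice g _ hg)]
  exact integral_add ((continuous_intervalIntegral_snd hf _ _).intervalIntegrable _ _)
    ((continuous_intervalIntegral_snd hg _ _).intervalIntegrable _ _)

lemma cint_const_mul (c : ℝ) (f : ℝ × ℝ → ℝ) : cint (fun p => c * f p) = c * cint f := by
  simp only [cint, intervalIntegral.integral_const_mul]

lemma cint_mono (hf : Continuous f) (hg : Continuous g)
    (h : ∀ p : ℝ × ℝ, p.2 ∈ Icc (-1 : ℝ) 1 → f p ≤ g p) : cint f ≤ cint g := by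
  refine integral_mono_on (by positivity)
    ((continuous_intervalIntegral_snd hf _ _).intervalIntegrable _ _)
    ((continuous_intervalIntegral_snd hg _ _).intervalIntegrable _ _) fun x _ => ?_
  exact integral_mono_on (by norm_num)
    ((hf.comp (continuous_const.prodMk continuous_id)).intervalIntegrable _ _)
    ((hg.comp (continuous_const.prodMk continuous_id)).intervalIntegrable _ _)
    fun y hy => h (x, y) hy

lemma cint_pdx_eq_zero (hf : ContDiff ℝ 1 f) (hper : ∀ x y, f (x + 2 * π, y) = f (x, y)) :
    cint (pdx f) = 0 := by
  have hc : Continuous (pdx f) := (contDiff_pdx hf (zero_add 1).le).continuous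
  have hd : Differentiable ℝ f := hf.differentiable one_ne_zero
  rw [cint, intervalIntegral_intervalIntegral_swap (F := fun x y => pdx f (x, y))
    ((hc.continuousOn.integrableOn_compact (isCompact_uIcc.prod isCompact_uIcc)).mono_set
      (prod_mono uIoc_subset_uIcc uIoc_subset_uIcc))]
  have hloop : ∀ y, ∫ x in (0 : ℝ)..(2 * π), pdx f (x, y) = 0 := fun y => by
    rw [integral_eq_sub_of_hasDerivAt (f := fun t => f (t, y))
      (fun x _ => hasDerivAt_pdx (hd (x, y)))
      ((hc.comp (continuous_id.prodMk continuous_const)).intervalIntegrable _ _),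
      ← zero_add (2 * π), hper, sub_self]
  simp only [hloop, intervalIntegral.integral_zero]

lemma cint_pdy_eq (hf : ContDiff ℝ 1 f) :
    cint (pdy f) = ∫ x in (0 : ℝ)..(2 * π), (f (x, 1) - f (x, -1)) := by
  have hc : Continuous (pdy f) := (contDiff_pdy hf (zero_add 1).le).continuous
  have hd : Differentiable ℝ f := hf.differentiable one_ne_zero
  refine integral_congr fun x _ => ?_
  exact integral_eq_sub_of_hasDerivAt (f := fun t => f (x, t))
    (fun y _ => hasDerivAt_pdy (hd (x, y)))
    ((hc.comp (continuous_const.prodMk continuous_id)).intervalIntegrable _ _)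

lemma cint_le_of_add_pdx_add_pdy_le {F G : ℝ × ℝ → ℝ} (hf : Continuous f)
    (hg : Continuous g) (hF : ContDiff ℝ 1 F) (hG : ContDiff ℝ 1 G)
    (hFper : ∀ x y, F (x + 2 * π, y) = F (x, y))
    (hGbd : ∀ x, G (x, -1) ≤ G (x, 1))
    (h : ∀ p : ℝ × ℝ, p.2 ∈ Icc (-1 : ℝ) 1 → f p + pdx F p + pdy G p ≤ g p) :
    cint f ≤ cint g := by
  have hFc : Continuous (pdx F) := (contDiff_pdx hF (zero_add 1).le).continuous
  have hGc : Continuous (pdy G) := (contDiff_pdy hG (zero_add 1).le).continuous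
  have hflux : 0 ≤ cint (pdy G) := by
    rw [cint_pdy_eq hG]
    exact integral_nonneg (by positivity) fun x _ => sub_nonneg.mpr (hGbd x)
  calc cint f ≤ cint f + cint (pdx F) + cint (pdy G) := by
        rw [cint_pdx_eq_zero hF hFper]; linarith
    _ = cint (f + pdx F + pdy G) := by rw [cint_add (hf.add hFc) hGc, cint_add hf hFc]
    _ ≤ cint g := cint_mono ((hf.add hFc).add hGc) hg h

end ChannelIntegral

lemma MonotoneOn.exists_sq_sub_le_sq {g : ℝ → ℝ} {a b : ℝ} (hab : a ≤ b)
    (hg : MonotoneOn g (Icc a b)) :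
    ∃ c, g a ≤ c ∧ c ≤ g b ∧ ∀ y ∈ Icc a b, (g y - c) ^ 2 ≤ g y ^ 2 := by
  have ha : a ∈ Icc a b := left_mem_Icc.2 hab
  have hb : b ∈ Icc a b := right_mem_Icc.2 hab
  rcases le_or_gt 0 (g a) with h0a | ha0
  · exact ⟨g a, le_rfl, hg ha hb hab, fun y hy => by nlinarith [hg ha hy hy.1]⟩
  rcases le_or_gt (g b) 0 with hb0 | h0b
  · exact ⟨g b, hg ha hb hab, le_rfl, fun y hy => by nlinarith [hg hy hb hy.2]⟩
  · exact ⟨0, ha0.le, h0b.le, fun y _ => by simp⟩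

lemma cL2sq_pdx_le {V : ℝ → ℝ} (hV : ContDiff ℝ 2 V)
    (hV'' : ∀ y ∈ Icc (-1 : ℝ) 1, 1 ≤ deriv (deriv V) y ∧ deriv (deriv V) y ≤ 3)
    {u : ℝ × ℝ → ℝ} (hu : ContDiff ℝ 2 u) (hper : ∀ x y, u (x + 2 * π, y) = u (x, y))
    (hbc : ∀ x, pdx u (x, 1) = 0 ∧ pdx u (x, -1) = 0) :
    cL2sq (pdx u) ≤ 4 * cL2sq (pdy u) + cL2sq (fun p => deriv V p.2 * lap u p) := by
  have hV' : ContDiff ℝ 1 (deriv V) := hV.deriv'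
  have hmono : MonotoneOn (deriv V) (Icc (-1) 1) :=
    monotoneOn_of_deriv_nonneg (convex_Icc _ _) hV'.continuous.continuousOn
      (hV'.differentiable one_ne_zero).differentiableOn fun y hy => by
        rw [interior_Icc] at hy
        linarith [(hV'' y (Ioo_subset_Icc_self hy)).1]
  obtain ⟨c, hc_left, hc_right, hWV⟩ := hmono.exists_sq_sub_le_sq (by norm_num)
  set W : ℝ → ℝ := fun y => deriv V y - c
  have hW : ContDiff ℝ 1 W := hV'.sub contDiff_const
  have hux : ContDiff ℝ 1 (pdx u) := contDiff_pdx hu le_rfl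
  have huy : ContDiff ℝ 1 (pdy u) := contDiff_pdy hu le_rfl
  have hlap : Continuous (lap u) :=
    (contDiff_pdx hux (zero_add 1).le).continuous.add (contDiff_pdy huy (zero_add 1).le).continuous
  rw [cL2sq, cL2sq, cL2sq, ← cint_const_mul, ← cint_add (by fun_prop) (by fun_prop)]
  refine cint_le_of_add_pdx_add_pdy_le (F := fun q => 2 * W q.2 * (pdx u q * pdy u q))
    (G := fun q => W q.2 * (pdy u q ^ 2 - pdx u q ^ 2)) (by fun_prop) (by fun_prop) (by fun_prop)
    (by fun_prop) (fun x y => ?_) (fun x => ?_) (fun p hp => ?_)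
  · simp only [pdx_periodic hper, pdy_periodic hper]
  · simp only [(hbc x).1, (hbc x).2, W]
    nlinarith [sq_nonneg (pdy u (x, 1)), sq_nonneg (pdy u (x, -1))]
  · have hid := rellich_identity (W := W) hu
      ((hV'.differentiable one_ne_zero p.2).hasDerivAt.sub_const c)
    have hWp : W p.2 ^ 2 ≤ deriv V p.2 ^ 2 := hWV p.2 hp
    obtain ⟨hV''₁, hV''₃⟩ := hV'' p.2 hp
    rw [Pi.add_apply]
    nlinarith [mul_nonneg (sub_nonneg.2 hV''₁) (sq_nonneg (pdx u p)),
      mul_nonneg (sub_nonneg.2 hV''₃) (sq_nonneg (pdy u p)),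
      sq_nonneg (pdy u p - W p.2 * lap u p),
      mul_le_mul_of_nonneg_right hWp (sq_nonneg (lap u p))]

/-- Let `V ∈ C²([-1,1])` with `1 ≤ V'' ≤ 3`, and let `ψ ∈ H³` of the channel
`T × [-1,1]` vanishing on the boundary `y = ±1`; set `ω = Δψ`.  Then
`‖∂_xx ψ‖²_{L²} ≤ 4‖∂_xy ψ‖²_{L²} + ‖V' ∂_x ω‖²_{L²}`. -/
theorem channel_xx_estimate (V : ℝ → ℝ) (hV : ContDiff ℝ 2 V)
    (hV'' : ∀ y ∈ Set.Icc (-1:ℝ) 1, 1 ≤ deriv (deriv V) y ∧ deriv (deriv V) y ≤ 3)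
    (ψ : ℝ × ℝ → ℝ) (hψ : ContDiff ℝ 3 ψ)
    (hper : ∀ x y : ℝ, ψ (x + 2 * π, y) = ψ (x, y))
    (hbc : ∀ x : ℝ, ψ (x, 1) = 0 ∧ ψ (x, -1) = 0) :
    cL2sq (pdx (pdx ψ))
      ≤ 4 * cL2sq (pdy (pdx ψ))
        + cL2sq (fun p => deriv V p.2 * pdx (lap ψ) p) := by
  rw [pdx_lap_comm hψ]
  exact cL2sq_pdx_le hV hV'' (contDiff_pdx hψ (by norm_num)) (pdx_periodic hper) fun x =>
    ⟨pdx_eq_zero_of_forall (pdx_eq_zero_of_forall fun x => (hbc x).1) x,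
      pdx_eq_zero_of_forall (pdx_eq_zero_of_forall fun x => (hbc x).2) x⟩
end
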